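/- arXiv:2307.01272 — 3 statements merged into one kernel-verified Lean document; each statement's English description precedes it below -/
import Mathlib

section
/- For all integers n ≥ 0 and all odd integers t ≥ 1, the number of t-colored overpartitions of 8n+7 is divisible by 32, i.e., p̄_{-t}(8n+7) ≡ 0 (mod 32). -/
open scoped Classical

/-- The infinite product `∏_{k ≥ 0} f k` of formal power series, in the situation where,
for each fixed power of `q`, only finitely many factors contribute: the coefficient of
`q^n` is read off from the product of the factors `f 0, …, f n` (all later factors are
assumed to be `1 + O(q^{n+1})`). -/
noncomputable def seriesProd (f : ℕ → PowerSeries ℤ) : PowerSeries ℤ :=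
  PowerSeries.mk fun n => PowerSeries.coeff (R := ℤ) n (∏ k ∈ Finset.range (n + 1), f k)

/-- The generating function `∏_{k ≥ 1} (1 - q^{2k})^t / (1 - q^k)^{2t}`
for `t`-colored overpartitions. -/
noncomputable def overGF (t : ℕ) : PowerSeries ℤ :=
  seriesProd fun k =>
    (1 - (PowerSeries.X : PowerSeries ℤ) ^ (2 * (k + 1))) ^ t *
      (PowerSeries.invOfUnit (1 - (PowerSeries.X : PowerSeries ℤ) ^ (k + 1)) 1) ^ (2 * t)

/-- `p̄_{-t}(n)`, the number of `t`-colored overpartitions of `n`: the coefficient of `q^n`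
in `∏_{k ≥ 1} (1 - q^{2k})^t / (1 - q^k)^{2t}`. -/
noncomputable def pbar (t n : ℕ) : ℤ :=
  PowerSeries.coeff (R := ℤ) n (overGF t)

/-- Ramanujan's theta function `φ(q^m) = 1 + 2 ∑_{k ≥ 1} q^{m k²}`. -/
noncomputable def phi (m : ℕ) : PowerSeries ℤ :=
  PowerSeries.mk fun n =>
    if n = 0 then 1 else if ∃ k : ℕ, 0 < k ∧ n = m * k ^ 2 then 2 else 0

/-- `φ(-q) = 1 + 2 ∑_{k ≥ 1} (-1)^{k²} q^{k²}` (note `(-1)^{k²} = (-1)^n` at `n = k²`). -/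
noncomputable def phiNeg : PowerSeries ℤ :=
  PowerSeries.mk fun n =>
    if n = 0 then 1 else if ∃ k : ℕ, 0 < k ∧ n = k ^ 2 then 2 * (-1) ^ n else 0

/-- Ramanujan's theta function `ψ(q^m) = ∑_{k ≥ 0} q^{m·k(k+1)/2}`. -/
noncomputable def psi (m : ℕ) : PowerSeries ℤ :=
  PowerSeries.mk fun n => if ∃ k : ℕ, 2 * n = m * (k * (k + 1)) then 1 else 0

/-- `f_r = ∏_{j ≥ 1} (1 - q^{r j})`. -/
noncomputable def fr (r : ℕ) : PowerSeries ℤ :=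
  seriesProd fun j => 1 - (PowerSeries.X : PowerSeries ℤ) ^ (r * (j + 1))

/-!
By Gauss's identity `∏ (1 - q^k)² / (1 - q^{2k}) = φ(-q)`, the generating function of
`p̄_{-t}` is `φ(-q)^{-t}`. Write `φ(-q) = 1 - 2E` with `E` supported on the squares. Since
`(2E)^5 ≡ 0 (mod 32)`, modulo `32` the series `φ(-q)^{-t}` is a polynomial in `2E`, and the
coefficient of `q^{8n+7}` in `(2E)^i` is divisible by `32`: for `i ≤ 3` it vanishes because
`8n + 7` is not a sum of at most three squares modulo `8`, and `E⁴ = (E²)²` has even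
coefficients at odd exponents.

Gauss's identity is the limit of its finite form `∑_j p^{j²} [2M, M + j]_{p²} = (-p; p²)_M²`,
which follows by induction on `M` from the symmetric recurrence
`[n+2, k] = r^{n+2-k} [n, k-2] + (1 + r^{n+1}) [n, k-1] + r^k [n, k]`. Modulo `X^n`, taking
`M = n` and `p = -q`, every surviving Gaussian binomial equals `1 / (q²; q²)_{2n}`.
-/

open PowerSeries Finset Function

section GaussBinomial

variable {R : Type*} [CommRing R]

/-- The `q`-Pochhammer symbol `(a; q)_n`. -/
def qPoch (a q : R) (n : ℕ) : R :=
  ∏ i ∈ range n, (1 - a * q ^ i)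

@[simp]
lemma qPoch_zero (a q : R) : qPoch a q 0 = 1 :=
  prod_range_zero _

lemma qPoch_succ (a q : R) (n : ℕ) : qPoch a q (n + 1) = qPoch a q n * (1 - a * q ^ n) :=
  prod_range_succ _ _

lemma qPoch_two_mul (a q : R) (n : ℕ) :
    qPoch a q (2 * n) = qPoch a (q ^ 2) n * qPoch (a * q) (q ^ 2) n := by
  induction n with
  | zero => simp [qPoch]
  | succ n ih =>
    rw [show 2 * (n + 1) = 2 * n + 1 + 1 by ring, qPoch_succ, qPoch_succ, ih, qPoch_succ,
      qPoch_succ]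
    ring

/-- Gaussian binomial coefficients in base `r`, indexed by `k : ℤ` so that they vanish
outside `0 ≤ k ≤ n`. -/
def gaussBinom (r : R) : ℕ → ℤ → R
  | 0, k => if k = 0 then 1 else 0
  | n + 1, k => gaussBinom r n (k - 1) + r ^ k.toNat * gaussBinom r n k

variable (r : R)

lemma gaussBinom_succ (n : ℕ) (k : ℤ) :
    gaussBinom r (n + 1) k = gaussBinom r n (k - 1) + r ^ k.toNat * gaussBinom r n k :=
  rfl

lemma gaussBinom_eq_zero {n : ℕ} {k : ℤ} (hk : k < 0 ∨ n < k) : gaussBinom r n k = 0 := by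
  induction n generalizing k with
  | zero => rw [gaussBinom, if_neg (by omega)]
  | succ n ih => rw [gaussBinom_succ, ih (by omega), ih (by omega), mul_zero, add_zero]

lemma gaussBinom_zero_right (n : ℕ) : gaussBinom r n 0 = 1 := by
  induction n with
  | zero => simp [gaussBinom]
  | succ n ih => simp [gaussBinom_succ, ih, gaussBinom_eq_zero]

lemma gaussBinom_self (n : ℕ) : gaussBinom r n n = 1 := by
  induction n with
  | zero => simp [gaussBinom]
  | succ n ih =>
    rw [gaussBinom_succ, Nat.cast_succ, add_sub_cancel_right, ih,
      gaussBinom_eq_zero r (k := (n : ℤ) + 1) (by omega), mul_zero, add_zero]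

/-- The truncation by `Int.toNat` is harmless: off the support of `gaussBinom r n c` both
sides vanish. -/
lemma pow_toNat_mul_pow_toNat_mul_gaussBinom {n : ℕ} {a b c : ℤ} (hab : a + b = n + 1)
    (ha : c ≤ a) (hb : n - c ≤ b) :
    r ^ a.toNat * r ^ b.toNat * gaussBinom r n c = r ^ (n + 1) * gaussBinom r n c := by
  by_cases hc : 0 ≤ c ∧ c ≤ n
  · rw [← pow_add]
    congr 2
    omega
  · rw [gaussBinom_eq_zero r (by omega), mul_zero, mul_zero]

lemma gaussBinom_succ' (n : ℕ) (k : ℤ) :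
    gaussBinom r (n + 1) k
      = r ^ (n + 1 - k).toNat * gaussBinom r n (k - 1) + gaussBinom r n k := by
  induction n generalizing k with
  | zero =>
    rcases eq_or_ne k 0 with rfl | h0
    · simp [gaussBinom]
    rcases eq_or_ne k 1 with rfl | h1
    · simp [gaussBinom]
    · simp [gaussBinom, h0, h1, sub_eq_zero]
  | succ n ih =>
    rw [gaussBinom_succ r (n + 1) k]
    conv_rhs => rw [gaussBinom_succ r n (k - 1), gaussBinom_succ r n k]
    rw [ih (k - 1), ih k]
    have key := pow_toNat_mul_pow_toNat_mul_gaussBinom r (n := n) (a := k) (b := n + 1 - k)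
      (c := k - 1) (by ring) (by omega) (by omega)
    have key' := pow_toNat_mul_pow_toNat_mul_gaussBinom r (n := n) (a := k - 1)
      (b := ((n + 1 : ℕ) : ℤ) + 1 - k) (c := k - 1) (by push_cast; ring) (by omega)
      (by push_cast; omega)
    rw [show (n : ℤ) + 1 - (k - 1) = ((n + 1 : ℕ) : ℤ) + 1 - k by push_cast; ring,
      show k - 1 - 1 = k - 2 by ring]
    linear_combination key - key'

lemma gaussBinom_add_two (n : ℕ) (k : ℤ) :
    gaussBinom r (n + 2) k = r ^ (n + 2 - k).toNat * gaussBinom r n (k - 2)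
      + (1 + r ^ (n + 1)) * gaussBinom r n (k - 1) + r ^ k.toNat * gaussBinom r n k := by
  have key := pow_toNat_mul_pow_toNat_mul_gaussBinom r (n := n) (a := k) (b := n + 1 - k)
    (c := k - 1) (by ring) (by omega) (by omega)
  rw [gaussBinom_succ, gaussBinom_succ', gaussBinom_succ',
    show (n : ℤ) + 1 - (k - 1) = n + 2 - k by ring, show k - 1 - 1 = k - 2 by ring]
  linear_combination key

lemma gaussBinom_mul_qPoch (a b : ℕ) :
    gaussBinom r (a + b) a * qPoch r r a * qPoch r r b = qPoch r r (a + b) := by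
  induction a generalizing b with
  | zero => simp [gaussBinom_zero_right, qPoch]
  | succ a iha =>
    induction b with
    | zero => rw [add_zero, gaussBinom_self, qPoch_zero, mul_one, one_mul]
    | succ b ihb =>
      have h1 := iha (b + 1)
      rw [show a + (b + 1) = a + 1 + b by ring] at h1
      rw [show a + 1 + (b + 1) = a + 1 + b + 1 by ring, gaussBinom_succ, Int.toNat_natCast,
        show ((a + 1 : ℕ) : ℤ) - 1 = a by push_cast; ring, qPoch_succ r r (a + 1 + b)]
      rw [qPoch_succ] at h1 ihb ⊢
      rw [qPoch_succ]
      linear_combination (1 - r * r ^ a) * h1 + r ^ (a + 1) * (1 - r * r ^ b) * ihb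

end GaussBinomial

section FiniteTheta

variable {R : Type*} [CommRing R]

lemma hasFiniteSupport_mul_gaussBinom (r : R) (n : ℕ) (f : ℤ → R) (d : ℤ) :
    HasFiniteSupport fun j => f j * gaussBinom r n (j + d) := by
  refine (Set.finite_Icc (-d) (n - d)).subset fun j hj => ?_
  by_contra hout
  rw [Set.mem_Icc] at hout
  exact hj (show f j * _ = 0 by rw [gaussBinom_eq_zero r (by omega), mul_zero])

noncomputable def finiteTheta (p : R) (M : ℕ) : R :=
  ∑ᶠ j : ℤ, p ^ j.natAbs ^ 2 * gaussBinom (p ^ 2) (2 * M) (j + M)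

lemma pow_natAbs_sq_mul_gaussBinom_shift (p : R) (M : ℕ) {i j e : ℤ}
    (he : -(M : ℤ) ≤ i → i ≤ M → 0 ≤ e) (hsq : j ^ 2 + 2 * e = 2 * M + 1 + i ^ 2) :
    p ^ j.natAbs ^ 2 * (p ^ 2) ^ e.toNat * gaussBinom (p ^ 2) (2 * M) (i + M)
      = p ^ (2 * M + 1) * (p ^ i.natAbs ^ 2 * gaussBinom (p ^ 2) (2 * M) (i + M)) := by
  by_cases hi : -(M : ℤ) ≤ i ∧ i ≤ M
  · rw [← pow_mul, ← pow_add, ← mul_assoc, ← pow_add]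
    congr 2
    zify
    push_cast [sq_abs, Int.toNat_of_nonneg (he hi.1 hi.2)]
    linear_combination hsq
  · rw [gaussBinom_eq_zero _ (by omega), mul_zero, mul_zero, mul_zero]

lemma pow_mul_gaussBinom_succ (p : R) (M : ℕ) (j : ℤ) :
    p ^ j.natAbs ^ 2 * gaussBinom (p ^ 2) (2 * (M + 1)) (j + (M + 1 : ℕ))
      = p ^ (2 * M + 1) * (p ^ (j - 1).natAbs ^ 2 * gaussBinom (p ^ 2) (2 * M) (j - 1 + M))
        + (1 + (p ^ (2 * M + 1)) ^ 2) * (p ^ j.natAbs ^ 2 * gaussBinom (p ^ 2) (2 * M) (j + M))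
        + p ^ (2 * M + 1)
          * (p ^ (j + 1).natAbs ^ 2 * gaussBinom (p ^ 2) (2 * M) (j + 1 + M)) := by
  rw [show 2 * (M + 1) = 2 * M + 2 by ring, gaussBinom_add_two,
    show j + ((M + 1 : ℕ) : ℤ) - 2 = j - 1 + M by push_cast; ring,
    show j + ((M + 1 : ℕ) : ℤ) - 1 = j + M by push_cast; ring,
    show ((2 * M : ℕ) : ℤ) + 2 - (j + (M + 1 : ℕ)) = M + 1 - j by push_cast; ring,
    show j + ((M + 1 : ℕ) : ℤ) = j + 1 + M by push_cast; ring]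
  linear_combination
    pow_natAbs_sq_mul_gaussBinom_shift p M (j := j) (i := j - 1) (e := M + 1 - j) (by omega)
        (by ring)
      + pow_natAbs_sq_mul_gaussBinom_shift p M (j := j) (i := j + 1) (e := j + 1 + M) (by omega)
        (by ring)

lemma finiteTheta_succ (p : R) (M : ℕ) :
    finiteTheta p (M + 1) = (1 + p ^ (2 * M + 1)) ^ 2 * finiteTheta p M := by
  set h : ℤ → R := fun j => p ^ j.natAbs ^ 2 * gaussBinom (p ^ 2) (2 * M) (j + M)
  have hfin : HasFiniteSupport h := hasFiniteSupport_mul_gaussBinom _ _ _ _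
  have hfin_shift (c : ℤ) : HasFiniteSupport fun j => h (j + c) :=
    hfin.fun_comp_of_injective (add_left_injective c)
  have hshift (c : ℤ) : ∑ᶠ j, h (j + c) = finiteTheta p M :=
    finsum_comp_equiv (Equiv.addRight c)
  rw [finiteTheta, finsum_congr fun j => by rw [pow_mul_gaussBinom_succ, sub_eq_add_neg],
    finsum_add_distrib, finsum_add_distrib, ← mul_finsum', ← mul_finsum', ← mul_finsum',
    hshift, hshift]
  · change _ + _ * finiteTheta p M + _ = _
    ring
  · exact hfin_shift 1
  · exact hfin
  · exact hfin_shift (-1)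
  · exact HasFiniteSupport.mul_right _ (hfin_shift (-1))
  · exact HasFiniteSupport.mul_right _ hfin
  · exact (HasFiniteSupport.mul_right _ (hfin_shift (-1))).add
      (HasFiniteSupport.mul_right _ hfin)
  · exact HasFiniteSupport.mul_right _ (hfin_shift 1)

lemma finiteTheta_eq (p : R) (M : ℕ) : finiteTheta p M = qPoch (-p) (p ^ 2) M ^ 2 := by
  induction M with
  | zero =>
    rw [finiteTheta, finsum_eq_single _ 0 fun j hj => ?_]
    · simp [gaussBinom]
    · simp [gaussBinom, hj]
  | succ M ih =>
    rw [finiteTheta_succ, ih, qPoch_succ]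
    ring

end FiniteTheta

section Truncation

variable {R : Type*} [CommRing R]

noncomputable abbrev modX (n : ℕ) : R⟦X⟧ →+* R⟦X⟧ ⧸ Ideal.span {(X : R⟦X⟧) ^ n} :=
  Ideal.Quotient.mk _

lemma modX_eq_modX_iff {n : ℕ} {A B : R⟦X⟧} :
    modX n A = modX n B ↔ ∀ m < n, coeff m A = coeff m B := by
  simp only [modX, Ideal.Quotient.eq, Ideal.mem_span_singleton, X_pow_dvd_iff, map_sub,
    sub_eq_zero]

lemma modX_eq_zero_of_dvd {n : ℕ} {A : R⟦X⟧} (h : X ^ n ∣ A) : modX n A = 0 :=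
  Ideal.Quotient.eq_zero_iff_mem.2 (Ideal.mem_span_singleton.2 h)

lemma modX_qPoch_eq {n k l : ℕ} {a q : R⟦X⟧} (h : X ^ n ∣ a * q ^ k) (hkl : k ≤ l) :
    modX n (qPoch a q l) = modX n (qPoch a q k) := by
  induction l, hkl using Nat.le_induction with
  | base => rfl
  | succ l hkl ih =>
    have hl : X ^ n ∣ a * q ^ l := h.trans ⟨q ^ (l - k), by rw [mul_assoc, ← pow_add,
      Nat.add_sub_cancel' hkl]⟩
    rw [qPoch_succ, map_mul, ih, map_sub, map_one, modX_eq_zero_of_dvd hl, sub_zero, mul_one]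

lemma modX_qPoch_X_sq_eq {n k l : ℕ} (hk : n ≤ 2 * k + 2) (hkl : k ≤ l) :
    modX n (qPoch (X ^ 2 : R⟦X⟧) (X ^ 2) l) = modX n (qPoch (X ^ 2) (X ^ 2) k) :=
  modX_qPoch_eq (by rw [← pow_mul, ← pow_add]; exact pow_dvd_pow X (by omega)) hkl

lemma isUnit_qPoch {a : R⟦X⟧} (ha : constantCoeff a = 0) (q : R⟦X⟧) (m : ℕ) :
    IsUnit (qPoch a q m) := by
  rw [isUnit_iff_constantCoeff, qPoch, map_prod]
  simp [ha]

lemma X_pow_dvd_neg_X_pow {n m : ℕ} (h : n ≤ m) :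
    (X : R⟦X⟧) ^ n ∣ (-X) ^ m := by
  rw [neg_pow]
  exact (pow_dvd_pow X h).mul_left _

lemma coeff_neg_X_pow (m e : ℕ) :
    coeff m ((-X : R⟦X⟧) ^ e) = if m = e then (-1) ^ m else 0 := by
  rw [neg_pow, ← map_one C, ← map_neg, ← map_pow, coeff_C_mul_X_pow]
  split_ifs with h <;> simp [h]

end Truncation

section GaussIdentity

/-- When `j² < n`, both `(q²; q²)_{n ± j}` agree with `(q²; q²)_{2n}` modulo `X ^ n`, so the
product formula inverts `[2n, n + j]_{q²}`; otherwise `q^{j²}` kills the term. -/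
lemma modX_neg_X_pow_mul_gaussBinom (n : ℕ) (j : ℤ) :
    modX n ((-X) ^ j.natAbs ^ 2 * gaussBinom (X ^ 2) (2 * n) (j + n))
      * modX n (qPoch (X ^ 2) (X ^ 2) (2 * n)) = modX n ((-X : ℤ⟦X⟧) ^ j.natAbs ^ 2) := by
  by_cases hj : j.natAbs ^ 2 < n
  · have h2j : 2 * j.natAbs ≤ n := by nlinarith
    obtain ⟨a, ha⟩ : ∃ a : ℕ, (a : ℤ) = j + n :=
      ⟨(j + n).toNat, Int.toNat_of_nonneg (by omega)⟩
    obtain ⟨b, hb⟩ : ∃ b : ℕ, (b : ℤ) = n - j :=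
      ⟨(n - j).toNat, Int.toNat_of_nonneg (by omega)⟩
    have hprod := congrArg (modX n) (gaussBinom_mul_qPoch (X ^ 2 : ℤ⟦X⟧) a b)
    have hunit := (isUnit_qPoch (a := (X ^ 2 : ℤ⟦X⟧)) (by simp) (X ^ 2) (2 * n)).map (modX n)
    rw [show a + b = 2 * n by omega, ha, map_mul, map_mul,
      ← modX_qPoch_X_sq_eq (n := n) (k := a) (l := 2 * n) (by omega) (by omega),
      ← modX_qPoch_X_sq_eq (n := n) (k := b) (l := 2 * n) (by omega) (by omega)] at hprod
    have hinv : modX n (gaussBinom (X ^ 2 : ℤ⟦X⟧) (2 * n) (j + n))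
        * modX n (qPoch (X ^ 2) (X ^ 2) (2 * n)) = 1 :=
      hunit.mul_right_cancel (hprod.trans (one_mul _).symm)
    rw [map_mul, mul_assoc, hinv, mul_one]
  · rw [modX_eq_zero_of_dvd (X_pow_dvd_neg_X_pow (by omega)), map_mul,
      modX_eq_zero_of_dvd (X_pow_dvd_neg_X_pow (by omega)), zero_mul, zero_mul]

lemma modX_finiteTheta_mul (n : ℕ) :
    modX n (finiteTheta (-X) n) * modX n (qPoch (X ^ 2) (X ^ 2) (2 * n))
      = modX n (∑ j ∈ Icc (-(n : ℤ)) n, (-X : ℤ⟦X⟧) ^ j.natAbs ^ 2) := by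
  rw [finiteTheta, neg_sq, finsum_eq_sum_of_support_subset (s := Icc (-(n : ℤ)) n), map_sum,
    map_sum, sum_mul]
  · exact sum_congr rfl fun j _ => modX_neg_X_pow_mul_gaussBinom n j
  · intro j hj
    by_contra hout
    rw [coe_Icc, Set.mem_Icc] at hout
    apply hj
    dsimp only
    rw [gaussBinom_eq_zero _ (by omega), mul_zero]

lemma filter_Icc_natAbs_sq_eq {n k : ℕ} (hk : k ≤ n) :
    (Icc (-(n : ℤ)) n).filter (fun j => k ^ 2 = j.natAbs ^ 2) = {(k : ℤ), -(k : ℤ)} := by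
  ext j
  simp only [mem_filter, mem_Icc, mem_insert, mem_singleton,
    (Nat.pow_left_injective two_ne_zero).eq_iff, eq_comm (a := k), Int.natAbs_eq_iff]
  omega

lemma modX_sum_neg_X_pow_natAbs_sq (n : ℕ) :
    modX n (∑ j ∈ Icc (-(n : ℤ)) n, (-X : ℤ⟦X⟧) ^ j.natAbs ^ 2) = modX n phiNeg := by
  rw [modX_eq_modX_iff]
  intro m hm
  simp only [map_sum, coeff_neg_X_pow, ← sum_filter, sum_const, nsmul_eq_mul, phiNeg, coeff_mk]
  by_cases hsq : ∃ k, m = k ^ 2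
  · obtain ⟨k, rfl⟩ := hsq
    rw [filter_Icc_natAbs_sq_eq (by nlinarith)]
    rcases Nat.eq_zero_or_pos k with rfl | hk
    · simp
    · rw [if_neg (by positivity), if_pos ⟨k, hk, rfl⟩, card_pair (by omega)]
      simp
  · rw [filter_false_of_mem fun j _ h => hsq ⟨j.natAbs, h⟩,
      if_neg fun h => hsq ⟨0, by simp [h]⟩, if_neg fun ⟨k, _, h⟩ => hsq ⟨k, h⟩]
    simp

lemma modX_gauss (n : ℕ) :
    modX n (qPoch X X n) ^ 2 = modX n phiNeg * modX n (qPoch (X ^ 2) (X ^ 2) n) := by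
  have htheta := modX_finiteTheta_mul n
  rw [modX_sum_neg_X_pow_natAbs_sq, finiteTheta_eq, neg_neg, neg_sq] at htheta
  have hsplit := qPoch_two_mul (X : ℤ⟦X⟧) X n
  rw [← sq] at hsplit
  have hP : modX n (qPoch (X : ℤ⟦X⟧) X (2 * n)) = modX n (qPoch X X n) :=
    modX_qPoch_eq (by rw [← pow_succ']; exact pow_dvd_pow (X : ℤ⟦X⟧) (by omega)) (by omega)
  rw [← hP, hsplit, map_mul]
  rw [modX_qPoch_X_sq_eq (n := n) (k := n) (l := 2 * n) (by omega) (by omega), map_pow]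
    at htheta
  linear_combination modX n (qPoch (X ^ 2) (X ^ 2) n) * htheta

end GaussIdentity

lemma phiNeg_mul_invOfUnit : phiNeg * invOfUnit phiNeg 1 = 1 :=
  mul_invOfUnit _ _ (by simp [phiNeg, ← coeff_zero_eq_constantCoeff_apply])

lemma coeff_overGF_eq_coeff_inv_phiNeg_pow (t m : ℕ) :
    coeff m (overGF t) = coeff m (invOfUnit phiNeg 1 ^ t) := by
  set V : ℤ⟦X⟧ := ∏ k ∈ range (m + 1), invOfUnit (1 - X ^ (k + 1)) 1
  set π := modX (R := ℤ) (m + 1)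
  have hPV : π (qPoch X X (m + 1)) * π V = 1 := by
    rw [← map_mul, qPoch, ← prod_mul_distrib, prod_eq_one, map_one]
    exact fun k _ => by rw [← pow_succ']; exact mul_invOfUnit _ _ (by simp)
  have hphi : π phiNeg * π (invOfUnit phiNeg 1) = 1 := by
    rw [← map_mul, phiNeg_mul_invOfUnit, map_one]
  have hinv : π (qPoch (X ^ 2) (X ^ 2) (m + 1)) * π V ^ 2 = π (invOfUnit phiNeg 1) := by
    linear_combination (-(π V ^ 2 * π (invOfUnit phiNeg 1))) * modX_gauss (m + 1)
      + π (invOfUnit phiNeg 1) * (π (qPoch X X (m + 1)) * π V + 1) * hPV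
      - π V ^ 2 * π (qPoch (X ^ 2) (X ^ 2) (m + 1)) * hphi
  have hfactor : ∏ k ∈ range (m + 1), ((1 - (X : ℤ⟦X⟧) ^ (2 * (k + 1))) ^ t
      * invOfUnit (1 - X ^ (k + 1)) 1 ^ (2 * t))
      = qPoch (X ^ 2) (X ^ 2) (m + 1) ^ t * V ^ (2 * t) := by
    rw [prod_mul_distrib, prod_pow, prod_pow, qPoch]
    congr 2
    exact prod_congr rfl fun k _ => by ring
  rw [overGF, seriesProd, coeff_mk, hfactor]
  refine modX_eq_modX_iff.1 ?_ m (lt_add_one m)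
  rw [map_mul, map_pow, map_pow, map_pow, ← hinv]
  ring

section SupportedMod

open scoped Pointwise

variable {R : Type*} [CommSemiring R] {N : ℕ}

def SupportedMod (N : ℕ) (S : Finset (ZMod N)) (F : R⟦X⟧) : Prop :=
  ∀ m, coeff m F ≠ 0 → (m : ZMod N) ∈ S

lemma supportedMod_one : SupportedMod N 0 (1 : R⟦X⟧) := by
  intro m hm
  rw [coeff_one] at hm
  simp_all

lemma SupportedMod.mul {S T : Finset (ZMod N)} {F G : R⟦X⟧} (hF : SupportedMod N S F)
    (hG : SupportedMod N T G) : SupportedMod N (S + T) (F * G) := by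
  intro m hm
  rw [coeff_mul] at hm
  obtain ⟨⟨a, b⟩, hab, hne⟩ := exists_ne_zero_of_sum_ne_zero hm
  rw [HasAntidiagonal.mem_antidiagonal] at hab
  rw [← hab, Nat.cast_add]
  exact add_mem_add (hF a (left_ne_zero_of_mul hne)) (hG b (right_ne_zero_of_mul hne))

lemma SupportedMod.pow {S : Finset (ZMod N)} {F : R⟦X⟧} (hF : SupportedMod N S F) (i : ℕ) :
    SupportedMod N (i • S) (F ^ i) := by
  induction i with
  | zero => rw [zero_nsmul, pow_zero]; exact supportedMod_one
  | succ i ih => rw [succ_nsmul, pow_succ]; exact ih.mul hF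

lemma SupportedMod.coeff_eq_zero {S : Finset (ZMod N)} {F : R⟦X⟧} (hF : SupportedMod N S F)
    {m : ℕ} (hm : (m : ZMod N) ∉ S) : coeff m F = 0 :=
  not_not.1 fun h => hm (hF m h)

end SupportedMod

lemma two_dvd_coeff_sq_of_odd {R : Type*} [CommSemiring R] (F : R⟦X⟧) {m : ℕ} (hm : Odd m) :
    2 ∣ coeff m (F ^ 2) := by
  obtain ⟨k, rfl⟩ := hm
  set f : ℕ → R := fun a => coeff a F * coeff (2 * k + 1 - a) F
  have hhalf : ∑ x ∈ range (k + 1), f (k + 1 + x) = ∑ x ∈ range (k + 1), f x := by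
    rw [← sum_range_reflect]
    refine sum_congr rfl fun x hx => ?_
    rw [mem_range] at hx
    simp only [f, mul_comm (coeff (k + 1 + (k + 1 - 1 - x)) F)]
    congr 3 <;> omega
  rw [sq, coeff_mul, Nat.sum_antidiagonal_eq_sum_range_succ_mk,
    show (2 * k + 1).succ = (k + 1) + (k + 1) by omega, sum_range_add]
  change 2 ∣ ∑ x ∈ range (k + 1), f x + ∑ x ∈ range (k + 1), f (k + 1 + x)
  rw [hhalf, ← two_mul]
  exact dvd_mul_right _ _

noncomputable def thetaTail : ℤ⟦X⟧ :=
  mk fun m => if ∃ k, 0 < k ∧ m = k ^ 2 then -(-1) ^ m else 0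

lemma phiNeg_eq_one_sub_two_mul_thetaTail : phiNeg = 1 - 2 * thetaTail := by
  ext m
  rw [phiNeg, coeff_mk, map_sub, coeff_one, ← map_ofNat C 2, coeff_C_mul, thetaTail, coeff_mk]
  rcases eq_or_ne m 0 with rfl | hm
  · have h0 : ¬∃ k, 0 < k ∧ 0 = k ^ 2 := fun ⟨k, hk, h⟩ => (pow_pos hk 2).ne h
    simp [h0]
  · simp only [if_neg hm]
    split_ifs <;> ring

lemma supportedMod_thetaTail : SupportedMod 8 {0, 1, 4} thetaTail := by
  intro m hm
  rw [thetaTail, coeff_mk] at hm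
  obtain ⟨k, -, rfl⟩ : ∃ k, 0 < k ∧ m = k ^ 2 := by by_contra h; exact hm (if_neg h)
  have hsq : ∀ x : ZMod 8, x ^ 2 ∈ ({0, 1, 4} : Finset (ZMod 8)) := by decide
  exact_mod_cast hsq k

lemma dvd_two_pow_mul_coeff_pow {E : ℤ⟦X⟧} (hE : SupportedMod 8 {0, 1, 4} E) (n i : ℕ) :
    32 ∣ 2 ^ i * coeff (8 * n + 7) (E ^ i) := by
  have h7 : ((8 * n + 7 : ℕ) : ZMod 8) = 7 := by
    push_cast
    rw [show (8 : ZMod 8) = 0 by decide, zero_mul, zero_add]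
  rcases (show i ≤ 3 ∨ i = 4 ∨ 5 ≤ i by omega) with hi | rfl | hi
  · rw [(hE.pow i).coeff_eq_zero (by rw [h7]; interval_cases i <;> decide), mul_zero]
    exact dvd_zero _
  · obtain ⟨c, hc⟩ := two_dvd_coeff_sq_of_odd (E ^ 2) (m := 8 * n + 7) ⟨4 * n + 3, by ring⟩
    rw [← pow_mul] at hc
    exact ⟨c, by rw [hc]; ring⟩
  · exact (pow_dvd_pow 2 hi).mul_right _

lemma dvd_coeff_aeval {E : ℤ⟦X⟧} (hE : SupportedMod 8 {0, 1, 4} E) (n : ℕ)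
    (P : Polynomial ℤ) :
    32 ∣ coeff (8 * n + 7) (Polynomial.aeval (2 * E) P) := by
  rw [Polynomial.aeval_eq_sum_range, map_sum]
  refine dvd_sum fun i _ => ?_
  rw [map_smul, smul_eq_mul, mul_pow, ← map_ofNat C 2, ← map_pow, coeff_C_mul]
  exact (dvd_two_pow_mul_coeff_pow hE n i).mul_left _

lemma dvd_coeff_inv_phiNeg_pow (t n : ℕ) : 32 ∣ coeff (8 * n + 7) (invOfUnit phiNeg 1 ^ t) := by
  set E := thetaTail
  set ψ := invOfUnit phiNeg 1
  set u : ℤ⟦X⟧ := 1 + 2 * E + (2 * E) ^ 2 + (2 * E) ^ 3 + (2 * E) ^ 4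
  have hψ : (1 - 2 * E) * ψ = 1 := by
    rw [← phiNeg_eq_one_sub_two_mul_thetaTail, phiNeg_mul_invOfUnit]
  have hu : u ^ t = Polynomial.aeval (2 * E) ((1 + (Polynomial.X : Polynomial ℤ)
      + Polynomial.X ^ 2 + Polynomial.X ^ 3 + Polynomial.X ^ 4) ^ t) := by
    simp [u]
  obtain ⟨Z, hZ⟩ : (32 : ℤ⟦X⟧) ∣ ψ ^ t - u ^ t :=
    (Dvd.intro (E ^ 5 * ψ) (by linear_combination (-u) * hψ)).trans (sub_dvd_pow_sub_pow ψ u t)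
  rw [show ψ ^ t = u ^ t + 32 * Z by rw [← hZ]; ring, map_add, hu, ← map_ofNat C 32,
    coeff_C_mul]
  exact dvd_add (dvd_coeff_aeval supportedMod_thetaTail n _) (dvd_mul_right _ _)

theorem pbar_eight_n_add_7_general (t : ℕ) (n : ℕ) :
    (32 : ℤ) ∣ pbar t (8 * n + 7) := by
  rw [pbar, coeff_overGF_eq_coeff_inv_phiNeg_pow]
  exact dvd_coeff_inv_phiNeg_pow t n

/-- For all `n ≥ 0` and all odd `t ≥ 1`, `p̄_{-t}(8n+7) ≡ 0 (mod 32)`. -/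
theorem pbar_eight_n_add_7 (t : ℕ) (ht1 : 1 ≤ t) (ht : Odd t) (n : ℕ) :
    (32 : ℤ) ∣ pbar t (8 * n + 7) :=
  pbar_eight_n_add_7_general t n
end

section
/- The following identity of formal power series over ℤ holds: φ(-q) · ∏_{i≥0} φ(q^{2^i})^{2^i} = 1, i.e., 1/φ(-q) = ∏_{i≥0} φ(q^{2^i})^{2^i}, where the infinite product converges in the formal power series topology. -/
open scoped Classical

/-!
Expanding both sides as sums over representations, `φ(q^m) φ(-q^m) = φ(-q^{2m})²` says
`∑_{m(a² + b²) = n} (-1)^b = ∑_{2m(u² + v²) = n} (-1)^{u + v}`: on the left the terms with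
`a + b` odd cancel in pairs under `(a, b) ↦ (b, a)`, and `(u, v) ↦ (u + v, u - v)` matches the
remaining ones with the terms on the right. Multiplying these identities for `m = 1, 2, …, 2^{N-1}`
telescopes to `φ(-q) ∏_{i < N} φ(q^{2^i})^{2^i} = φ(-q^{2^N})^{2^N} ≡ 1 (mod q^{2^N})`, and the
factors with `i ≥ N` are `≡ 1 (mod q^N)`.
-/

open PowerSeries Finset

section Truncation

variable {R : Type*} [CommRing R]

lemma coeff_eq_of_smodEq {N n : ℕ} {f g : R⟦X⟧} (h : f ≡ g [SMOD Ideal.span {(X : R⟦X⟧) ^ N}])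
    (hn : n < N) : coeff n f = coeff n g := by
  rw [SModEq.sub_mem, Ideal.mem_span_singleton, X_pow_dvd_iff] at h
  simpa [sub_eq_zero] using h n hn

lemma smodEq_X_pow_mono {M N : ℕ} (hMN : M ≤ N) {f g : R⟦X⟧}
    (h : f ≡ g [SMOD Ideal.span {(X : R⟦X⟧) ^ N}]) : f ≡ g [SMOD Ideal.span {(X : R⟦X⟧) ^ M}] :=
  h.mono (Ideal.span_singleton_le_span_singleton.mpr (pow_dvd_pow X hMN))

end Truncation

noncomputable def sqSolutions (m n : ℕ) : Finset ℤ := {j ∈ Icc (-n : ℤ) n | m * j ^ 2 = n}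

/-- The theta series `∑_{j ∈ ℤ} w j q^{m j²}`; for `m ≠ 0` the box `[-n, n]` in `sqSolutions`
contains every `j` with `m j² = n`. -/
noncomputable def theta (m : ℕ) (w : ℤ → ℤ) : ℤ⟦X⟧ :=
  mk fun n => ∑ j ∈ sqSolutions m n, w j

lemma mem_Icc_of_mul_sq_le {m n : ℕ} {j : ℤ} (hm : 0 < m) (h : m * j ^ 2 ≤ n) :
    j ∈ Icc (-n : ℤ) n := by
  have hj : |j| ≤ n := calc
    |j| ≤ j ^ 2 := by rw [Int.abs_eq_natAbs]; exact Int.natAbs_le_self_sq j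
    _ ≤ m * j ^ 2 := le_mul_of_one_le_left (sq_nonneg j) (by exact_mod_cast hm)
    _ ≤ n := h
  exact mem_Icc.mpr (abs_le.mp hj)

lemma mem_sqSolutions {m n : ℕ} (hm : 0 < m) {j : ℤ} : j ∈ sqSolutions m n ↔ m * j ^ 2 = n := by
  simp only [sqSolutions, mem_filter, and_iff_right_iff_imp]
  exact fun h => mem_Icc_of_mul_sq_le hm h.le

lemma sqSolutions_zero (m : ℕ) : sqSolutions m 0 = {0} := by
  simp [sqSolutions, filter_singleton]

lemma sqSolutions_mul_sq {m : ℕ} (hm : 0 < m) (k : ℕ) :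
    sqSolutions m (m * k ^ 2) = {(k : ℤ), -(k : ℤ)} := by
  ext j
  rw [mem_sqSolutions hm, mem_insert, mem_singleton, ← sq_eq_sq_iff_eq_or_eq_neg]
  push_cast
  exact ⟨fun h => mul_left_cancel₀ (by positivity) h, fun h => by rw [h]⟩

lemma sqSolutions_eq_empty {m n : ℕ} (h : ∀ k : ℕ, n ≠ m * k ^ 2) : sqSolutions m n = ∅ := by
  refine eq_empty_of_forall_notMem fun j hj => h j.natAbs ?_
  have := (mem_filter.mp hj).2
  zify
  rw [sq_abs, this]

lemma coeff_theta (m n : ℕ) (w : ℤ → ℤ) : coeff n (theta m w) = ∑ j ∈ sqSolutions m n, w j :=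
  coeff_mk _ _

lemma coeff_theta_of_forall_ne {m n : ℕ} (w : ℤ → ℤ) (h : ∀ k : ℕ, n ≠ m * k ^ 2) :
    coeff n (theta m w) = 0 := by
  rw [coeff_theta, sqSolutions_eq_empty h, sum_empty]

lemma coeff_theta_mul_sq {m k : ℕ} (w : ℤ → ℤ) (hm : 0 < m) (hk : 0 < k) :
    coeff (m * k ^ 2) (theta m w) = w k + w (-k) := by
  rw [coeff_theta, sqSolutions_mul_sq hm, sum_pair (by omega)]

lemma phi_eq_theta (m : ℕ) : phi m = theta m 1 := by
  ext n
  rw [phi, coeff_mk]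
  by_cases hn : ∃ k : ℕ, n = m * k ^ 2
  · obtain ⟨k, rfl⟩ := hn
    rcases Nat.eq_zero_or_pos k with rfl | hk
    · simp [coeff_theta, sqSolutions_zero]
    rcases Nat.eq_zero_or_pos m with rfl | hm
    · simp [coeff_theta, sqSolutions_zero]
    rw [coeff_theta_mul_sq _ hm hk, if_neg (by positivity), if_pos ⟨k, hk, rfl⟩]
    rfl
  · simp only [not_exists] at hn
    rw [coeff_theta_of_forall_ne _ hn, if_neg (by simpa using hn 0), if_neg]
    rintro ⟨k, -, rfl⟩
    exact hn k rfl

/-- `φ(-q^m)`, as `(-1)^{j²} = (-1)^j`. -/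
noncomputable def phiNegAt (m : ℕ) : ℤ⟦X⟧ := theta m fun j => (j.negOnePow : ℤ)

lemma phiNeg_eq_phiNegAt_one : phiNeg = phiNegAt 1 := by
  ext n
  rw [phiNeg, coeff_mk, phiNegAt]
  by_cases hn : ∃ k : ℕ, n = k ^ 2
  · obtain ⟨k, rfl⟩ := hn
    rcases Nat.eq_zero_or_pos k with rfl | hk
    · simp [coeff_theta, sqSolutions_zero]
    have h := coeff_theta_mul_sq (fun j => (j.negOnePow : ℤ)) zero_lt_one hk
    rw [one_mul] at h
    have hsq : (-1 : ℤ) ^ k ^ 2 = (-1) ^ k := by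
      rw [← Int.coe_negOnePow_natCast, ← Int.coe_negOnePow_natCast, Nat.cast_pow, sq,
        Int.negOnePow_mul_self]
    rw [h, if_neg (by positivity), if_pos ⟨k, hk, rfl⟩, Int.negOnePow_neg, hsq,
      Int.coe_negOnePow_natCast, two_mul]
  · simp only [not_exists] at hn
    rw [coeff_theta_of_forall_ne _ (by simpa using hn), if_neg (by simpa using hn 0), if_neg]
    rintro ⟨k, -, rfl⟩
    exact hn k rfl

noncomputable def sqSumSolutions (a b n : ℕ) : Finset (ℤ × ℤ) :=
  {p ∈ Icc (-n : ℤ) n ×ˢ Icc (-n : ℤ) n | a * p.1 ^ 2 + b * p.2 ^ 2 = n}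

lemma mem_sqSumSolutions {a b n : ℕ} (ha : 0 < a) (hb : 0 < b) {p : ℤ × ℤ} :
    p ∈ sqSumSolutions a b n ↔ a * p.1 ^ 2 + b * p.2 ^ 2 = n := by
  simp only [sqSumSolutions, mem_filter, mem_product, and_iff_right_iff_imp]
  intro h
  have h1 : 0 ≤ (a : ℤ) * p.1 ^ 2 := by positivity
  have h2 : 0 ≤ (b : ℤ) * p.2 ^ 2 := by positivity
  exact ⟨mem_Icc_of_mul_sq_le ha (by omega), mem_Icc_of_mul_sq_le hb (by omega)⟩

lemma coeff_theta_mul_theta {a b : ℕ} (ha : 0 < a) (hb : 0 < b) (v w : ℤ → ℤ) (n : ℕ) :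
    coeff n (theta a v * theta b w) = ∑ p ∈ sqSumSolutions a b n, v p.1 * w p.2 := by
  have hnonneg : ∀ p : ℤ × ℤ, 0 ≤ (a : ℤ) * p.1 ^ 2 ∧ 0 ≤ (b : ℤ) * p.2 ^ 2 :=
    fun p => ⟨by positivity, by positivity⟩
  rw [coeff_mul, ← sum_fiberwise_of_maps_to (s := sqSumSolutions a b n) (t := antidiagonal n)
    (g := fun p => (((a : ℤ) * p.1 ^ 2).toNat, ((b : ℤ) * p.2 ^ 2).toNat))]
  · refine sum_congr rfl fun x hx => ?_
    rw [coeff_theta, coeff_theta, sum_mul_sum, ← sum_product']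
    refine sum_congr (ext fun p => ?_) fun _ _ => rfl
    rw [HasAntidiagonal.mem_antidiagonal] at hx
    simp only [mem_product, mem_filter, mem_sqSolutions ha, mem_sqSolutions hb,
      mem_sqSumSolutions ha hb, Prod.ext_iff]
    have := hnonneg p
    omega
  · intro p hp
    rw [mem_sqSumSolutions ha hb] at hp
    rw [HasAntidiagonal.mem_antidiagonal]
    have := hnonneg p
    omega

lemma sum_negOnePow_sqSumSolutions_of_odd {m : ℕ} (hm : 0 < m) (n : ℕ) :
    ∑ p ∈ sqSumSolutions m m n with ¬Even (p.1 + p.2), (p.2.negOnePow : ℤ) = 0 := by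
  refine sum_involution (fun p _ => p.swap) (fun p hp => ?_) (fun p hp _ h => ?_)
    (fun p hp => ?_) fun _ _ => rfl
  · obtain ⟨k, hk⟩ := Int.not_even_iff_odd.mp (mem_filter.mp hp).2
    have h : p.1.negOnePow = (p.2 + 1).negOnePow :=
      (Int.negOnePow_eq_iff _ _).mpr ⟨k - p.2, by omega⟩
    simp [h, Int.negOnePow_succ]
  · refine (mem_filter.mp hp).2 ⟨p.1, ?_⟩
    rw [Prod.ext_iff] at h
    simp only [Prod.fst_swap, Prod.snd_swap] at h
    rw [← h.1]
  · simp only [mem_filter, mem_sqSumSolutions hm hm, Prod.fst_swap, Prod.snd_swap] at hp ⊢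
    rw [add_comm, add_comm p.2]
    exact hp

lemma sum_negOnePow_sqSumSolutions_of_even {m : ℕ} (hm : 0 < m) (n : ℕ) :
    ∑ p ∈ sqSumSolutions m m n with Even (p.1 + p.2), (p.2.negOnePow : ℤ) =
      ∑ p ∈ sqSumSolutions (2 * m) (2 * m) n, (p.1.negOnePow : ℤ) * p.2.negOnePow := by
  have h2m : 0 < 2 * m := by omega
  symm
  refine sum_bij (fun p _ => (p.1 + p.2, p.1 - p.2)) (fun p hp => ?_)
    (fun p _ q _ h => ?_) (fun q hq => ?_) fun p _ => ?_
  · rw [mem_sqSumSolutions h2m h2m] at hp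
    rw [mem_filter, mem_sqSumSolutions hm hm]
    exact ⟨by push_cast at hp; linear_combination hp, ⟨p.1, by ring⟩⟩
  · simp only [Prod.ext_iff] at h ⊢
    omega
  · rw [mem_filter, mem_sqSumSolutions hm hm] at hq
    obtain ⟨hq, r, hr⟩ := hq
    refine ⟨(r, r - q.2), ?_, ?_⟩
    · rw [mem_sqSumSolutions h2m h2m]
      push_cast
      linear_combination hq - m * (q.1 + 2 * r - q.2) * hr
    · simp only [Prod.ext_iff]
      omega
  · rw [Int.negOnePow_sub, Units.val_mul]

lemma phi_mul_phiNegAt {m : ℕ} (hm : 0 < m) : phi m * phiNegAt m = phiNegAt (2 * m) ^ 2 := by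
  ext n
  rw [phi_eq_theta, phiNegAt, phiNegAt, sq, coeff_theta_mul_theta hm hm,
    coeff_theta_mul_theta (by omega) (by omega),
    ← sum_filter_add_sum_filter_not _ fun p => Even (p.1 + p.2)]
  simp only [Pi.one_apply, one_mul]
  rw [sum_negOnePow_sqSumSolutions_of_odd hm, add_zero, sum_negOnePow_sqSumSolutions_of_even hm]

lemma phiNeg_mul_prod_phi (N : ℕ) :
    phiNeg * ∏ i ∈ range N, phi (2 ^ i) ^ 2 ^ i = phiNegAt (2 ^ N) ^ 2 ^ N := by
  induction N with
  | zero => simp [phiNeg_eq_phiNegAt_one]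
  | succ N ih =>
    rw [prod_range_succ, ← mul_assoc, ih, ← mul_pow, mul_comm, phi_mul_phiNegAt (by positivity),
      ← pow_mul, ← pow_succ', pow_succ]

lemma theta_smodEq (m : ℕ) (w : ℤ → ℤ) :
    theta m w ≡ C (w 0) [SMOD Ideal.span {(X : ℤ⟦X⟧) ^ m}] := by
  rw [SModEq.sub_mem, Ideal.mem_span_singleton, X_pow_dvd_iff]
  intro n hn
  rw [map_sub, sub_eq_zero, coeff_C]
  rcases Nat.eq_zero_or_pos n with rfl | hn0
  · simp [coeff_theta, sqSolutions_zero]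
  · rw [coeff_theta_of_forall_ne, if_neg hn0.ne']
    intro k hk
    rcases Nat.eq_zero_or_pos k with rfl | hk0
    · omega
    · have : m ≤ m * k ^ 2 := Nat.le_mul_of_pos_right m (by positivity)
      omega

lemma phi_smodEq_one (m : ℕ) : phi m ≡ 1 [SMOD Ideal.span {(X : ℤ⟦X⟧) ^ m}] := by
  simpa [phi_eq_theta] using theta_smodEq m 1

lemma phiNegAt_smodEq_one (m : ℕ) : phiNegAt m ≡ 1 [SMOD Ideal.span {(X : ℤ⟦X⟧) ^ m}] := by
  simpa [phiNegAt] using theta_smodEq m fun j => (j.negOnePow : ℤ)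

lemma seriesProd_smodEq {f : ℕ → ℤ⟦X⟧} (hf : ∀ k, f k ≡ 1 [SMOD Ideal.span {(X : ℤ⟦X⟧) ^ k}])
    (n : ℕ) : seriesProd f ≡ ∏ k ∈ range (n + 1), f k [SMOD Ideal.span {(X : ℤ⟦X⟧) ^ (n + 1)}] := by
  rw [SModEq.sub_mem, Ideal.mem_span_singleton, X_pow_dvd_iff]
  intro j hj
  rw [map_sub, sub_eq_zero, seriesProd, coeff_mk,
    ← prod_range_mul_prod_Ico f (by omega : j + 1 ≤ n + 1)]
  refine coeff_eq_of_smodEq ?_ (lt_add_one j)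
  have htail : ∏ k ∈ Ico (j + 1) (n + 1), f k ≡ 1 [SMOD Ideal.span {(X : ℤ⟦X⟧) ^ (j + 1)}] := by
    have h := SModEq.prod (I := Ideal.span {(X : ℤ⟦X⟧) ^ (j + 1)}) (s := Ico (j + 1) (n + 1))
      (x := f) (y := fun _ => 1) fun k hk => smodEq_X_pow_mono (mem_Ico.mp hk).1 (hf k)
    rwa [prod_const_one] at h
  simpa only [mul_one] using (SModEq.refl (∏ k ∈ range (j + 1), f k)).mul htail.symm

/-- `φ(-q) · ∏_{i ≥ 0} φ(q^{2^i})^{2^i} = 1`, i.e. `1/φ(-q) = ∏_{i ≥ 0} φ(q^{2^i})^{2^i}`. -/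
theorem phiNeg_inv :
    phiNeg * (seriesProd fun i => phi (2 ^ i) ^ 2 ^ i) = 1 := by
  ext n
  have hphi (i : ℕ) : phi (2 ^ i) ^ 2 ^ i ≡ 1 [SMOD Ideal.span {(X : ℤ⟦X⟧) ^ i}] := by
    simpa using smodEq_X_pow_mono Nat.lt_two_pow_self.le ((phi_smodEq_one (2 ^ i)).pow (2 ^ i))
  have hpartial := (SModEq.refl phiNeg).mul (seriesProd_smodEq hphi n)
  rw [phiNeg_mul_prod_phi] at hpartial
  have htail : phiNegAt (2 ^ (n + 1)) ^ 2 ^ (n + 1) ≡ 1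
      [SMOD Ideal.span {(X : ℤ⟦X⟧) ^ (n + 1)}] := by
    simpa using smodEq_X_pow_mono Nat.lt_two_pow_self.le
      ((phiNegAt_smodEq_one (2 ^ (n + 1))).pow (2 ^ (n + 1)))
  exact coeff_eq_of_smodEq (hpartial.trans htail) (lt_add_one n)
end

section
/- For all integers n ≥ 0, the coefficient of q^n in the formal power series φ(q)·φ(q²)²·φ(q⁴)⁴ over ℤ is divisible by 2 if n ≡ 1 (mod 8), by 4 if n ≡ 2 (mod 8), by 8 if n ≡ 3 (mod 8), by 2 if n ≡ 4 (mod 8), by 8 if n ≡ 5 (mod 8), by 8 if n ≡ 6 (mod 8), and by 32 if n ≡ 7 (mod 8). -/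
open scoped Classical

/-!
Record, for each residue class of the exponent modulo 8, a power of 2 dividing every coefficient
in that class. The series `φ(q^m)` has constant term 1 and all other coefficients in `{0, 2}`,
supported on exponents `m k² ≡ 0, m, 4m (mod 8)`. In a product the residue classes add and the
powers of 2 multiply; in a square the cross terms `aᵢ aⱼ` with `i ≠ j` occur twice, which gains
one more factor of 2. Applying this to `φ(q²)²` and twice to `φ(q⁴)⁴` yields exactly the stated
divisibilities.
-/

open Finset PowerSeries

theorem Nat.cast_eq_add_of_mem_antidiagonal {M : Type*} [AddMonoidWithOne M] {n : ℕ}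
    {ij : ℕ × ℕ} (h : ij ∈ antidiagonal n) : (n : M) = ij.1 + ij.2 := by
  rw [← mem_antidiagonal.mp h, Nat.cast_add]

section CoeffDvd

variable {R : Type*} [CommRing R] {N : ℕ}

def CoeffDvd (p : R) (w : ZMod N → ℕ) (f : R⟦X⟧) : Prop :=
  ∀ n : ℕ, p ^ w n ∣ coeff n f

variable {p : R} {u v w : ZMod N → ℕ} {f g : R⟦X⟧}

theorem CoeffDvd.dvd_coeff {n r : ℕ} (hf : CoeffDvd p w f) (hn : n % N = r) :
    p ^ w r ∣ coeff n f := by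
  simpa [← hn, ZMod.natCast_mod] using hf n

theorem CoeffDvd.mul (hf : CoeffDvd p u f) (hg : CoeffDvd p v g)
    (hw : ∀ a b, w (a + b) ≤ u a + v b) : CoeffDvd p w (f * g) := by
  intro n
  rw [coeff_mul]
  refine dvd_sum fun ij hij => ?_
  rw [Nat.cast_eq_add_of_mem_antidiagonal hij]
  calc p ^ w (ij.1 + ij.2) ∣ p ^ (u ij.1 + v ij.2) := pow_dvd_pow p (hw _ _)
    _ ∣ coeff ij.1 f * coeff ij.2 g := pow_add p _ _ ▸ mul_dvd_mul (hf ij.1) (hg ij.2)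

theorem CoeffDvd.sq (hf : CoeffDvd 2 u f) (hoff : ∀ a b, w (a + b) ≤ u a + u b + 1)
    (hdiag : ∀ a, w (a + a) ≤ u a + u a) : CoeffDvd 2 w (f ^ 2) := by
  intro n
  have hcross : ∀ ij ∈ antidiagonal n,
      (2 : R) ^ w n ∣ 2 * (coeff ij.1 f * coeff ij.2 f) := fun ij hij => by
    rw [Nat.cast_eq_add_of_mem_antidiagonal hij]
    calc (2 : R) ^ w (ij.1 + ij.2) ∣ 2 * 2 ^ (u ij.1 + u ij.2) :=
          pow_succ' (2 : R) _ ▸ pow_dvd_pow 2 (hoff _ _)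
      _ ∣ 2 * (coeff ij.1 f * coeff ij.2 f) :=
          mul_dvd_mul_left 2 (pow_add (2 : R) _ _ ▸ mul_dvd_mul (hf _) (hf _))
  have hsquare : ∀ i, (i, i) ∈ antidiagonal n → (2 : R) ^ w n ∣ coeff i f * coeff i f :=
    fun i hi => by
      rw [Nat.cast_eq_add_of_mem_antidiagonal hi]
      exact (pow_dvd_pow 2 (hdiag _)).trans (pow_add (2 : R) _ _ ▸ mul_dvd_mul (hf _) (hf _))
  -- modulo `2 ^ w n`, the terms at `(i, j)` and `(j, i)` cancel and the terms at `(i, i)` vanish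
  rw [pow_two, coeff_mul, ← Ideal.Quotient.eq_zero_iff_dvd, map_sum]
  refine sum_involution (fun ij _ => ij.swap) (fun ij hij => ?_) (fun ij hij hne heq => ?_)
    (fun ij hij => HasAntidiagonal.swap_mem_antidiagonal.mpr hij) (fun ij _ => ij.swap_swap)
  · rw [← map_add, Ideal.Quotient.eq_zero_iff_dvd, Prod.fst_swap, Prod.snd_swap,
      mul_comm (coeff ij.2 f), ← two_mul]
    exact hcross ij hij
  · obtain ⟨i, j⟩ := ij
    obtain rfl : j = i := congrArg Prod.fst heq
    exact hne ((Ideal.Quotient.eq_zero_iff_dvd _ _).mpr (hsquare _ hij))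

end CoeffDvd

theorem coeffDvd_phi (m : ℕ) {w : ZMod 8 → ℕ} (h0 : w 0 = 0) (hm : w m ≤ 1)
    (h4m : w (4 * m) ≤ 1) : CoeffDvd 2 w (phi m) := by
  intro n
  simp only [phi, coeff_mk]
  split_ifs with hn0 hsq
  · simp [hn0, h0]
  · obtain ⟨k, -, rfl⟩ := hsq
    have hk : ∀ x : ZMod 8, x ^ 2 = 0 ∨ x ^ 2 = 1 ∨ x ^ 2 = 4 := by decide
    have hw : w ((m * k ^ 2 : ℕ) : ZMod 8) ≤ 1 := by
      push_cast
      rcases hk k with h | h | h <;> simp [h, h0, hm, mul_comm _ (4 : ZMod 8), h4m]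
    exact (pow_dvd_pow 2 hw).trans (by norm_num)
  · exact dvd_zero _

/-- The coefficient of `qⁿ` in `φ(q)·φ(q²)²·φ(q⁴)⁴` is divisible by 2, 4, 8, 2, 8, 8, 32
according as `n ≡ 1, 2, 3, 4, 5, 6, 7 (mod 8)`. -/
theorem coeff_phi_prod (n : ℕ) :
    (n % 8 = 1 → (2 : ℤ) ∣ PowerSeries.coeff (R := ℤ) n (phi 1 * phi 2 ^ 2 * phi 4 ^ 4)) ∧
    (n % 8 = 2 → (4 : ℤ) ∣ PowerSeries.coeff (R := ℤ) n (phi 1 * phi 2 ^ 2 * phi 4 ^ 4)) ∧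
    (n % 8 = 3 → (8 : ℤ) ∣ PowerSeries.coeff (R := ℤ) n (phi 1 * phi 2 ^ 2 * phi 4 ^ 4)) ∧
    (n % 8 = 4 → (2 : ℤ) ∣ PowerSeries.coeff (R := ℤ) n (phi 1 * phi 2 ^ 2 * phi 4 ^ 4)) ∧
    (n % 8 = 5 → (8 : ℤ) ∣ PowerSeries.coeff (R := ℤ) n (phi 1 * phi 2 ^ 2 * phi 4 ^ 4)) ∧
    (n % 8 = 6 → (8 : ℤ) ∣ PowerSeries.coeff (R := ℤ) n (phi 1 * phi 2 ^ 2 * phi 4 ^ 4)) ∧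
    (n % 8 = 7 → (32 : ℤ) ∣ PowerSeries.coeff (R := ℤ) n (phi 1 * phi 2 ^ 2 * phi 4 ^ 4)) := by
  -- an entry 5 stands for `∞` (a class without nonzero coefficients): no exponent above 5 is needed
  have h1 : CoeffDvd (2 : ℤ) (N := 8) ![0, 1, 5, 5, 1, 5, 5, 5] (phi 1) :=
    coeffDvd_phi 1 rfl (by decide) (by decide)
  have h2 : CoeffDvd (2 : ℤ) (N := 8) ![0, 5, 1, 5, 5, 5, 5, 5] (phi 2) :=
    coeffDvd_phi 2 rfl (by decide) (by decide)
  have h4 : CoeffDvd (2 : ℤ) (N := 8) ![0, 5, 5, 5, 1, 5, 5, 5] (phi 4) :=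
    coeffDvd_phi 4 rfl (by decide) (by decide)
  have h2sq : CoeffDvd (2 : ℤ) (N := 8) ![0, 5, 2, 5, 2, 5, 5, 5] (phi 2 ^ 2) :=
    h2.sq (by decide) (by decide)
  have h4sq : CoeffDvd (2 : ℤ) (N := 8) ![0, 5, 5, 5, 2, 5, 5, 5] (phi 4 ^ 2) :=
    h4.sq (by decide) (by decide)
  have h4pow4 : CoeffDvd (2 : ℤ) (N := 8) ![0, 5, 5, 5, 3, 5, 5, 5] (phi 4 ^ 4) := by
    simpa only [← pow_mul] using h4sq.sq (by decide) (by decide)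
  have h12 : CoeffDvd (2 : ℤ) (N := 8) ![0, 1, 2, 3, 1, 3, 3, 5] (phi 1 * phi 2 ^ 2) :=
    h1.mul h2sq (by decide)
  have hprod : CoeffDvd (2 : ℤ) (N := 8) ![0, 1, 2, 3, 1, 3, 3, 5]
      (phi 1 * phi 2 ^ 2 * phi 4 ^ 4) :=
    h12.mul h4pow4 (by decide)
  refine ⟨fun h => ?_, fun h => ?_, fun h => ?_, fun h => ?_, fun h => ?_, fun h => ?_,
    fun h => ?_⟩ <;> simpa using hprod.dvd_coeff h
end
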